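/- arXiv:2305.13572 — 2 statements merged into one kernel-verified Lean document; each statement's English description precedes it below -/
import Mathlib

section
/- Let (X_i)_{i≥1} be a strictly stationary sequence of ℝ^d-valued random variables with strong mixing coefficients (α(k))_{k≥0} and common marginal characteristic function φ_X. Then for every n ≥ 1 and every u ∈ ℝ^d, E[ |φ̂_{X,n}(u) − φ_X(u)|² ] ≤ (2 C_{α,n} − 1)/n, where C_{α,n} = 1 + 4 ∑_{k=1}^{n−1} α(k). -/
open MeasureTheory Real Filter
open scoped BigOperators ENNReal

noncomputable section

namespace ADE

variable {Ω : Type*} [MeasurableSpace Ω] {E : Type*} [MeasurableSpace E]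

/-- Dot product on ℝ^d. -/
def dot {d : ℕ} (u x : Fin d → ℝ) : ℝ := ∑ i, u i * x i

/-- Characteristic function of a measure on ℝ^d. -/
def charFun {d : ℕ} (μ : Measure (Fin d → ℝ)) (u : Fin d → ℝ) : ℂ :=
  ∫ x, Complex.exp (Complex.I * (dot u x : ℂ)) ∂μ

/-- Empirical characteristic function from observations X_1, …, X_n. -/
def empCF {d n : ℕ} (X : Fin n → Ω → (Fin d → ℝ)) (ω : Ω) (u : Fin d → ℝ) : ℂ :=
  (n : ℂ)⁻¹ * ∑ j, Complex.exp (Complex.I * (dot u (X j ω) : ℂ))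

/-- Thresholded empirical characteristic function. -/
def threshCF {d n : ℕ} (κ : ℝ) (X : Fin n → Ω → (Fin d → ℝ)) (ω : Ω) (u : Fin d → ℝ) : ℂ :=
  if (1 + κ * Real.sqrt (Real.log n)) / Real.sqrt n ≤ ‖empCF X ω u‖
    then empCF X ω u else 0

/-- The cube [-m, m] = [-m₁,m₁] × ⋯ × [-m_d,m_d]. -/
def cube {d : ℕ} (m : Fin d → ℝ) : Set (Fin d → ℝ) := {u | ∀ i, |u i| ≤ m i}

/-- The density estimator f̂_n. -/
def fhat {d n : ℕ} (κ : ℝ) (X : Fin n → Ω → (Fin d → ℝ)) (ω : Ω) (x : Fin d → ℝ) : ℂ :=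
  (((2 * π) ^ d : ℝ) : ℂ)⁻¹ *
    ∫ u in cube (fun _ => (n : ℝ)), Complex.exp (-(Complex.I * (dot u x : ℂ))) * threshCF κ X ω u

/-- Fourier transform 𝓕f(u) = ∫ e^{i⟨u,x⟩} f(x) dx. -/
def fourierT {d : ℕ} (f : (Fin d → ℝ) → ℝ) (u : Fin d → ℝ) : ℂ :=
  ∫ x, Complex.exp (Complex.I * (dot u x : ℂ)) * (f x : ℂ)

/-- The function f_{A,m}, whose Fourier transform is (𝓕f)·1_{A([-m,m])}, via Fourier inversion. -/
def cutoffFn {d : ℕ} (A : Matrix (Fin d) (Fin d) ℝ) (m : Fin d → ℝ)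
    (f : (Fin d → ℝ) → ℝ) (x : Fin d → ℝ) : ℂ :=
  (((2 * π) ^ d : ℝ) : ℂ)⁻¹ *
    ∫ u in A.mulVec '' cube m, Complex.exp (-(Complex.I * (dot u x : ℂ))) * fourierT f u

/-- The class 𝓐 of invertible matrices mapping [-1,1]^d into itself. -/
def memA {d : ℕ} (A : Matrix (Fin d) (Fin d) ℝ) : Prop :=
  A.det ≠ 0 ∧ ∀ x : Fin d → ℝ, (∀ i, |x i| ≤ 1) → ∀ i, |A.mulVec x i| ≤ 1

/-- Empirical characteristic function from the first n terms of a sequence. -/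
def empCFseq {d : ℕ} (X : ℕ → Ω → (Fin d → ℝ)) (n : ℕ) (ω : Ω) (u : Fin d → ℝ) : ℂ :=
  (n : ℂ)⁻¹ * ∑ j : Fin n, Complex.exp (Complex.I * (dot u (X j ω) : ℂ))

/-- Thresholded empirical characteristic function (sequence version). -/
def threshCFseq {d : ℕ} (κ : ℝ) (X : ℕ → Ω → (Fin d → ℝ)) (n : ℕ) (ω : Ω) (u : Fin d → ℝ) : ℂ :=
  if (1 + κ * Real.sqrt (Real.log n)) / Real.sqrt n ≤ ‖empCFseq X n ω u‖
    then empCFseq X n ω u else 0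

/-- The density estimator f̂_n (sequence version). -/
def fhatSeq {d : ℕ} (κ : ℝ) (X : ℕ → Ω → (Fin d → ℝ)) (n : ℕ) (ω : Ω) (x : Fin d → ℝ) : ℂ :=
  (((2 * π) ^ d : ℝ) : ℂ)⁻¹ *
    ∫ u in cube (fun _ => (n : ℝ)),
      Complex.exp (-(Complex.I * (dot u x : ℂ))) * threshCFseq κ X n ω u

/-- Rosenblatt's α-dependence coefficient between two sub-σ-algebras. -/
def alphaDep (P : Measure Ω) (F G : MeasurableSpace Ω) : ℝ :=
  2 * sSup {x | ∃ A B : Set Ω, MeasurableSet[F] A ∧ MeasurableSet[G] B ∧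
      x = |(P (A ∩ B)).toReal - (P A).toReal * (P B).toReal|}

/-- σ-algebra generated by X_i, i ≤ k. -/
def sigmaLE (X : ℕ → Ω → E) (k : ℕ) : MeasurableSpace Ω :=
  ⨆ i ∈ Set.Iic k, MeasurableSpace.comap (X i) ‹MeasurableSpace E›

/-- σ-algebra generated by X_i, i ≥ k. -/
def sigmaGE (X : ℕ → Ω → E) (k : ℕ) : MeasurableSpace Ω :=
  ⨆ i ∈ Set.Ici k, MeasurableSpace.comap (X i) ‹MeasurableSpace E›

/-- Strong mixing coefficients of a sequence. -/
def mixCoef (P : Measure Ω) (X : ℕ → Ω → E) (n : ℕ) : ℝ :=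
  if n = 0 then 1 / 2
  else sSup {x | ∃ k : ℕ, x = alphaDep P (sigmaLE X k) (sigmaGE X (k + n))}

/-- Strict stationarity of a sequence. -/
def IsStrictStationary (P : Measure Ω) (X : ℕ → Ω → E) : Prop :=
  ∀ i k : ℕ, Measure.map (fun ω => fun j : Fin k => X (i + (j : ℕ)) ω) P
    = Measure.map (fun ω => fun j : Fin k => X (j : ℕ) ω) P

/-- Upper incomplete Gamma function Γ(s,x) = ∫_x^∞ z^{s-1} e^{-z} dz. -/
def incGamma (s x : ℝ) : ℝ := ∫ z in Set.Ioi x, z ^ (s - 1) * Real.exp (-z)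


def cov {Ω' : Type*} {mΩ' : MeasurableSpace Ω'} (P : Measure Ω') (f g : Ω' → ℝ) : ℝ :=
  (∫ ω, f ω * g ω ∂P) - (∫ ω, f ω ∂P) * (∫ ω, g ω ∂P)

lemma cov_comm {Ω' : Type*} {mΩ' : MeasurableSpace Ω'} (P : Measure Ω') (f g : Ω' → ℝ) :
    cov P f g = cov P g f := by
  simp [cov, mul_comm]

lemma integrable_bdd {Ω' : Type*} {mΩ' : MeasurableSpace Ω'} {P : Measure Ω'} [IsFiniteMeasure P]
    {f : Ω' → ℝ} (hm : AEStronglyMeasurable f P) {c : ℝ} (h : ∀ ω, |f ω| ≤ c) : Integrable f P :=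
  (integrable_const c).mono' hm (Filter.Eventually.of_forall (by simpa [Real.norm_eq_abs] using h))

lemma abs_PP_le_one {Ω' : Type*} {mΩ' : MeasurableSpace Ω'} (P : Measure Ω') [IsProbabilityMeasure P]
    (A B : Set Ω') : |(P (A ∩ B)).toReal - (P A).toReal * (P B).toReal| ≤ 1 := by
  have h1 : (P (A ∩ B)).toReal ≤ 1 := by
    simpa using ENNReal.toReal_mono (by simp) (prob_le_one (μ := P) (s := A ∩ B))
  have h2 : (P A).toReal ≤ 1 := by
    simpa using ENNReal.toReal_mono (by simp) (prob_le_one (μ := P) (s := A))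
  have h3 : (P B).toReal ≤ 1 := by
    simpa using ENNReal.toReal_mono (by simp) (prob_le_one (μ := P) (s := B))
  have n1 : (0:ℝ) ≤ (P (A ∩ B)).toReal := ENNReal.toReal_nonneg
  have n2 : (0:ℝ) ≤ (P A).toReal := ENNReal.toReal_nonneg
  have n3 : (0:ℝ) ≤ (P B).toReal := ENNReal.toReal_nonneg
  rw [abs_le]
  constructor <;> nlinarith

lemma alphaSet_bddAbove {Ω' : Type*} {mΩ' : MeasurableSpace Ω'} (P : Measure Ω')
    [IsProbabilityMeasure P] (F G : MeasurableSpace Ω') :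
    BddAbove {x | ∃ A B : Set Ω', MeasurableSet[F] A ∧ MeasurableSet[G] B ∧
      x = |(P (A ∩ B)).toReal - (P A).toReal * (P B).toReal|} := by
  refine ⟨1, ?_⟩
  rintro x ⟨A, B, hA, hB, rfl⟩
  exact abs_PP_le_one P A B

lemma alphaDep_nonneg {Ω' : Type*} {mΩ' : MeasurableSpace Ω'} (P : Measure Ω')
    [IsProbabilityMeasure P] (F G : MeasurableSpace Ω') : 0 ≤ @alphaDep Ω' mΩ' P F G := by
  have h0 : (0:ℝ) ∈ {x | ∃ A B : Set Ω', MeasurableSet[F] A ∧ MeasurableSet[G] B ∧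
      x = |(P (A ∩ B)).toReal - (P A).toReal * (P B).toReal|} :=
    ⟨∅, ∅, @MeasurableSet.empty Ω' F, @MeasurableSet.empty Ω' G, by simp⟩
  have := le_csSup (alphaSet_bddAbove P F G) h0
  unfold alphaDep; linarith

lemma alphaDep_le_two {Ω' : Type*} {mΩ' : MeasurableSpace Ω'} (P : Measure Ω')
    [IsProbabilityMeasure P] (F G : MeasurableSpace Ω') : @alphaDep Ω' mΩ' P F G ≤ 2 := by
  have h : sSup {x | ∃ A B : Set Ω', MeasurableSet[F] A ∧ MeasurableSet[G] B ∧
      x = |(P (A ∩ B)).toReal - (P A).toReal * (P B).toReal|} ≤ 1 := by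
    refine Real.sSup_le ?_ (by norm_num)
    rintro x ⟨A, B, hA, hB, rfl⟩
    exact abs_PP_le_one P A B
  unfold alphaDep; linarith

section CovIneq
variable {Ω' : Type*} {mΩ' : MeasurableSpace Ω'} (P : Measure Ω') [IsProbabilityMeasure P]

lemma cov_eq_integral {F : MeasurableSpace Ω'} (hF : F ≤ mΩ')
    {f g : Ω' → ℝ} (hfm : Measurable[F] f) (hf1 : ∀ ω, |f ω| ≤ 1)
    (hgm : AEStronglyMeasurable[mΩ'] g P) (hg1 : ∀ ω, |g ω| ≤ 1) :
    cov P f g = ∫ ω, f ω * ((P[g|F]) ω - ∫ x, g x ∂P) ∂P := by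
  haveI : SigmaFinite (P.trim hF) := by
    haveI := isFiniteMeasure_trim hF (μ := P); infer_instance
  have hgi : Integrable g P := integrable_bdd hgm hg1
  have hfm0 : Measurable[mΩ'] f := hfm.mono hF le_rfl
  have hfb : ∀ᵐ ω ∂P, ‖f ω‖ ≤ 1 := Filter.Eventually.of_forall (by simpa [Real.norm_eq_abs] using hf1)
  have hpull : P[(fun ω => f ω * g ω)|F] =ᵐ[P] fun ω => f ω * (P[g|F]) ω := by
    exact
      condExp_stronglyMeasurable_mul_of_bound hF hfm.stronglyMeasurable hgi 1 hfb
  have hfPg : Integrable (fun ω => f ω * (P[g|F]) ω) P :=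
    integrable_condExp.bdd_mul hfm0.aestronglyMeasurable hfb
  have h1 : ∫ ω, f ω * g ω ∂P = ∫ ω, f ω * (P[g|F]) ω ∂P := by
    rw [← integral_condExp hF (f := fun ω => f ω * g ω)]
    exact integral_congr_ae hpull
  have h2 : ∫ ω, f ω * ((P[g|F]) ω - ∫ x, g x ∂P) ∂P
      = ∫ ω, f ω * (P[g|F]) ω ∂P - (∫ ω, f ω ∂P) * (∫ x, g x ∂P) := by
    simp_rw [mul_sub]
    rw [integral_sub hfPg (by
      simpa using (integrable_bdd (P := P) hfm0.aestronglyMeasurable hf1).mul_const (∫ x, g x ∂P))]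
    rw [integral_mul_const]
  rw [cov, h1, h2]

lemma cov_le_cov_sign {F : MeasurableSpace Ω'} (hF : F ≤ mΩ')
    {g : Ω' → ℝ} (hgm : AEStronglyMeasurable[mΩ'] g P) (hg1 : ∀ ω, |g ω| ≤ 1) :
    ∃ s : Ω' → ℝ, Measurable[F] s ∧ (∀ ω, s ω = 1 ∨ s ω = -1) ∧
      ∀ f : Ω' → ℝ, Measurable[F] f → (∀ ω, |f ω| ≤ 1) → cov P f g ≤ cov P s g := by
  haveI : SigmaFinite (P.trim hF) := by
    haveI := isFiniteMeasure_trim hF (μ := P); infer_instance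
  set c : ℝ := ∫ x, g x ∂P with hc
  set h : Ω' → ℝ := fun ω => (P[g|F]) ω - c with hh
  have hhmF : Measurable[F] h :=
    ((stronglyMeasurable_condExp (f := g) (m := F)).measurable).sub measurable_const
  have hhi : Integrable h P := integrable_condExp.sub (integrable_const c)
  set s : Ω' → ℝ := fun ω => if 0 ≤ h ω then 1 else -1 with hs
  have hAF : MeasurableSet[F] {ω | 0 ≤ h ω} :=
    measurableSet_le measurable_const hhmF
  have hsmF : Measurable[F] s := Measurable.ite hAF measurable_const measurable_const
  have hspm : ∀ ω, s ω = 1 ∨ s ω = -1 := fun ω => by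
    by_cases h0 : 0 ≤ h ω <;> simp [hs, h0]
  have hs1 : ∀ ω, |s ω| ≤ 1 := fun ω => by rcases hspm ω with h1 | h1 <;> simp [h1]
  refine ⟨s, hsmF, hspm, fun f hfm hf1 => ?_⟩
  have hsh : ∀ ω, s ω * h ω = |h ω| := fun ω => by
    by_cases h0 : 0 ≤ h ω
    · simp [hs, h0, abs_of_nonneg h0]
    · push_neg at h0
      simp [hs, not_le.2 h0, abs_of_neg h0]
  have key : cov P f g ≤ ∫ ω, |h ω| ∂P := by
    rw [cov_eq_integral P hF hfm hf1 hgm hg1]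
    refine integral_mono ?_ hhi.abs (fun ω => ?_)
    · exact hhi.bdd_mul ((hfm.mono hF le_rfl).aestronglyMeasurable)
        (Filter.Eventually.of_forall (by simpa [Real.norm_eq_abs] using hf1))
    · calc f ω * h ω ≤ |f ω * h ω| := le_abs_self _
        _ = |f ω| * |h ω| := abs_mul _ _
        _ ≤ |h ω| := mul_le_of_le_one_left (abs_nonneg _) (hf1 ω)
  have key2 : ∫ ω, |h ω| ∂P = cov P s g := by
    rw [cov_eq_integral P hF hsmF hs1 hgm hg1]
    exact integral_congr_ae (Filter.Eventually.of_forall fun ω => (hsh ω).symm)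
  linarith


lemma cov_pm_eq {s t : Ω' → ℝ} {A B : Set Ω'}
    (hAm : MeasurableSet A) (hBm : MeasurableSet B)
    (hseq : s = fun ω => 2 * A.indicator 1 ω - 1)
    (hteq : t = fun ω => 2 * B.indicator 1 ω - 1) :
    cov P s t = 4 * ((P (A ∩ B)).toReal - (P A).toReal * (P B).toReal) := by
  have hiA : Integrable (A.indicator (1 : Ω' → ℝ)) P := (integrable_const (1:ℝ)).indicator hAm
  have hiB : Integrable (B.indicator (1 : Ω' → ℝ)) P := (integrable_const (1:ℝ)).indicator hBm
  have hiAB : Integrable ((A ∩ B).indicator (1 : Ω' → ℝ)) P :=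
    (integrable_const (1:ℝ)).indicator (hAm.inter hBm)
  have eS : ∫ ω, s ω ∂P = 2 * (P A).toReal - 1 := by
    rw [hseq, integral_sub (hiA.const_mul 2) (integrable_const 1), integral_const_mul,
      integral_indicator_one hAm]
    simp [Measure.real]
  have eT : ∫ ω, t ω ∂P = 2 * (P B).toReal - 1 := by
    rw [hteq, integral_sub (hiB.const_mul 2) (integrable_const 1), integral_const_mul,
      integral_indicator_one hBm]
    simp [Measure.real]
  have hprod : (fun ω => s ω * t ω) = fun ω =>
      (4 * (A ∩ B).indicator 1 ω - 2 * A.indicator 1 ω - 2 * B.indicator 1 ω) + 1 := by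
    funext ω
    rw [hseq, hteq]
    have h := congrFun (Set.inter_indicator_one (M₀ := ℝ) (s := A) (t := B)) ω
    simp only [Pi.mul_apply] at h
    rw [h]; ring
  have eST : ∫ ω, s ω * t ω ∂P
      = 4 * (P (A ∩ B)).toReal - 2 * (P A).toReal - 2 * (P B).toReal + 1 := by
    have hsub2 : Integrable (fun ω =>
        4 * (A ∩ B).indicator (1 : Ω' → ℝ) ω - 2 * A.indicator (1 : Ω' → ℝ) ω) P := by
      exact (hiAB.const_mul 4).sub (hiA.const_mul 2)
    have hsub3 : Integrable (fun ω =>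
        4 * (A ∩ B).indicator (1 : Ω' → ℝ) ω - 2 * A.indicator (1 : Ω' → ℝ) ω
          - 2 * B.indicator (1 : Ω' → ℝ) ω) P := by
      exact hsub2.sub (hiB.const_mul 2)
    rw [hprod]
    rw [integral_add hsub3 (integrable_const 1)]
    rw [integral_sub hsub2 (hiB.const_mul 2)]
    rw [integral_sub (hiAB.const_mul 4) (hiA.const_mul 2)]
    rw [integral_const_mul, integral_const_mul, integral_const_mul,
      integral_indicator_one (hAm.inter hBm), integral_indicator_one hAm,
      integral_indicator_one hBm]
    simp [Measure.real]
  rw [cov, eST, eS, eT]; ring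

lemma cov_sign_le {F G : MeasurableSpace Ω'} (hF : F ≤ mΩ') (hG : G ≤ mΩ')
    {s t : Ω' → ℝ} (hsm : Measurable[F] s) (htm : Measurable[G] t)
    (hspm : ∀ ω, s ω = 1 ∨ s ω = -1) (htpm : ∀ ω, t ω = 1 ∨ t ω = -1) :
    cov P s t ≤ 2 * @alphaDep Ω' mΩ' P F G := by
  classical
  set A : Set Ω' := s ⁻¹' {1} with hA
  set B : Set Ω' := t ⁻¹' {1} with hB
  have hAF : MeasurableSet[F] A := hsm (measurableSet_singleton 1)
  have hBG : MeasurableSet[G] B := htm (measurableSet_singleton 1)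
  have hAm : MeasurableSet[mΩ'] A := hF _ hAF
  have hBm : MeasurableSet[mΩ'] B := hG _ hBG
  have hseq : s = fun ω => 2 * A.indicator 1 ω - 1 := by
    funext ω
    rcases hspm ω with h1 | h1
    · have hmem : ω ∈ A := by simp [hA, h1]
      rw [Set.indicator_of_mem hmem, h1]; norm_num
    · have hmem : ω ∉ A := by
        rw [hA, Set.mem_preimage, Set.mem_singleton_iff, h1]; norm_num
      rw [Set.indicator_of_notMem hmem, h1]; norm_num
  have hteq : t = fun ω => 2 * B.indicator 1 ω - 1 := by
    funext ω
    rcases htpm ω with h1 | h1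
    · have hmem : ω ∈ B := by simp [hB, h1]
      rw [Set.indicator_of_mem hmem, h1]; norm_num
    · have hmem : ω ∉ B := by
        rw [hB, Set.mem_preimage, Set.mem_singleton_iff, h1]; norm_num
      rw [Set.indicator_of_notMem hmem, h1]; norm_num
  have hcov := cov_pm_eq P hAm hBm hseq hteq
  have hmem : |(P (A ∩ B)).toReal - (P A).toReal * (P B).toReal| ∈
      {x | ∃ A' B' : Set Ω', MeasurableSet[F] A' ∧ MeasurableSet[G] B' ∧
        x = |(P (A' ∩ B')).toReal - (P A').toReal * (P B').toReal|} :=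
    ⟨A, B, hAF, hBG, rfl⟩
  have hle := le_csSup (alphaSet_bddAbove P F G) hmem
  have habs : (P (A ∩ B)).toReal - (P A).toReal * (P B).toReal
      ≤ |(P (A ∩ B)).toReal - (P A).toReal * (P B).toReal| := le_abs_self _
  rw [hcov]
  unfold alphaDep
  linarith

lemma cov_le_alphaDep {F G : MeasurableSpace Ω'} (hF : F ≤ mΩ') (hG : G ≤ mΩ')
    {f g : Ω' → ℝ} (hfm : Measurable[F] f) (hgm : Measurable[G] g)
    (hf1 : ∀ ω, |f ω| ≤ 1) (hg1 : ∀ ω, |g ω| ≤ 1) :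
    cov P f g ≤ 2 * @alphaDep Ω' mΩ' P F G := by
  obtain ⟨s, hsm, hspm, hsle⟩ :=
    cov_le_cov_sign P hF ((hgm.mono hG le_rfl).aestronglyMeasurable) hg1
  have hs1 : ∀ ω, |s ω| ≤ 1 := fun ω => by rcases hspm ω with h | h <;> simp [h]
  obtain ⟨t, htm, htpm, htle⟩ :=
    cov_le_cov_sign P hG ((hsm.mono hF le_rfl).aestronglyMeasurable) hs1
  calc cov P f g ≤ cov P s g := hsle f hfm hf1
    _ = cov P g s := cov_comm P s g
    _ ≤ cov P t s := htle g hgm hg1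
    _ = cov P s t := cov_comm P t s
    _ ≤ 2 * @alphaDep Ω' mΩ' P F G := cov_sign_le P hF hG hsm htm hspm htpm


end CovIneq

section Sigma

variable {Ω' : Type*} [mΩ' : MeasurableSpace Ω'] {E' : Type*} [mE' : MeasurableSpace E']

lemma sigmaLE_le {X : ℕ → Ω' → E'} (hmeas : ∀ i, Measurable (X i)) (k : ℕ) :
    sigmaLE X k ≤ mΩ' :=
  iSup₂_le fun i _ => measurable_iff_comap_le.mp (hmeas i)

lemma sigmaGE_le {X : ℕ → Ω' → E'} (hmeas : ∀ i, Measurable (X i)) (k : ℕ) :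
    sigmaGE X k ≤ mΩ' :=
  iSup₂_le fun i _ => measurable_iff_comap_le.mp (hmeas i)

lemma measurable_sigmaLE {X : ℕ → Ω' → E'} {φ : E' → ℝ} (hφ : Measurable φ) {j k : ℕ}
    (hjk : j ≤ k) : Measurable[sigmaLE X k] fun ω => φ (X j ω) := by
  have h1 : @Measurable Ω' E' (MeasurableSpace.comap (X j) mE') mE' (X j) :=
    measurable_iff_comap_le.mpr le_rfl
  have h2 : MeasurableSpace.comap (X j) mE' ≤ sigmaLE X k :=
    le_iSup₂ (f := fun i (_ : i ∈ Set.Iic k) => MeasurableSpace.comap (X i) mE') j hjk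
  exact (hφ.comp h1).mono h2 le_rfl

lemma measurable_sigmaGE {X : ℕ → Ω' → E'} {φ : E' → ℝ} (hφ : Measurable φ) {j k : ℕ}
    (hjk : k ≤ j) : Measurable[sigmaGE X k] fun ω => φ (X j ω) := by
  have h1 : @Measurable Ω' E' (MeasurableSpace.comap (X j) mE') mE' (X j) :=
    measurable_iff_comap_le.mpr le_rfl
  have h2 : MeasurableSpace.comap (X j) mE' ≤ sigmaGE X k :=
    le_iSup₂ (f := fun i (_ : i ∈ Set.Ici k) => MeasurableSpace.comap (X i) mE') j hjk
  exact (hφ.comp h1).mono h2 le_rfl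

lemma mixSet_bddAbove (P : Measure Ω') [IsProbabilityMeasure P] (X : ℕ → Ω' → E') (m : ℕ) :
    BddAbove {x | ∃ k : ℕ, x = alphaDep P (sigmaLE X k) (sigmaGE X (k + m))} := by
  refine ⟨2, ?_⟩
  rintro x ⟨k, rfl⟩
  exact alphaDep_le_two P _ _

lemma alphaDep_le_mixCoef (P : Measure Ω') [IsProbabilityMeasure P] (X : ℕ → Ω' → E')
    {m : ℕ} (hm : m ≠ 0) (k : ℕ) :
    alphaDep P (sigmaLE X k) (sigmaGE X (k + m)) ≤ mixCoef P X m := by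
  unfold mixCoef
  rw [if_neg hm]
  exact le_csSup (mixSet_bddAbove P X m) ⟨k, rfl⟩

lemma mixCoef_nonneg (P : Measure Ω') [IsProbabilityMeasure P] (X : ℕ → Ω' → E') (m : ℕ) :
    0 ≤ mixCoef P X m := by
  rcases eq_or_ne m 0 with h | h
  · simp [mixCoef, h]
  · exact le_trans (alphaDep_nonneg P (sigmaLE X 0) (sigmaGE X (0 + m)))
      (alphaDep_le_mixCoef P X h 0)

lemma map_eq_of_stationary {P : Measure Ω'} {X : ℕ → Ω' → E'}
    (hstat : ∀ i k : ℕ, Measure.map (fun ω => fun j : Fin k => X (i + (j : ℕ)) ω) P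
      = Measure.map (fun ω => fun j : Fin k => X (j : ℕ) ω) P)
    (hmeas : ∀ i, Measurable (X i)) (j : ℕ) :
    Measure.map (X j) P = Measure.map (X 0) P := by
  have h := hstat j 1
  have h0 : Measurable fun v : Fin 1 → E' => v 0 := measurable_pi_apply 0
  have hj : Measurable fun ω => fun i : Fin 1 => X (j + (i : ℕ)) ω :=
    measurable_pi_lambda _ fun i => hmeas _
  have h1 : Measurable fun ω => fun i : Fin 1 => X (i : ℕ) ω :=
    measurable_pi_lambda _ fun i => hmeas _
  have h2 := congrArg (Measure.map (fun v : Fin 1 → E' => v 0)) h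
  rw [Measure.map_map h0 hj, Measure.map_map h0 h1] at h2
  have e1 : ((fun v : Fin 1 → E' => v 0) ∘ fun ω => fun i : Fin 1 => X (j + (i : ℕ)) ω) = X j := by
    funext ω; simp
  have e2 : ((fun v : Fin 1 → E' => v 0) ∘ fun ω => fun i : Fin 1 => X (i : ℕ) ω) = X 0 := by
    funext ω; simp
  rwa [e1, e2] at h2

lemma integral_comp_stat {P : Measure Ω'} {X : ℕ → Ω' → E'} (hmeas : ∀ i, Measurable (X i))
    (hmap : ∀ j, Measure.map (X j) P = Measure.map (X 0) P)
    {φ : E' → ℝ} (hφ : Measurable φ) (j : ℕ) :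
    ∫ ω, φ (X j ω) ∂P = ∫ x, φ x ∂(Measure.map (X 0) P) := by
  rw [← hmap j]
  exact (integral_map (hmeas j).aemeasurable hφ.aestronglyMeasurable).symm


end Sigma

set_option maxHeartbeats 2000000 in
/-- variance bound for the empirical characteristic function of a
strictly stationary strongly mixing sequence. -/
theorem empCF_variance_mixing
    (P : Measure Ω) [IsProbabilityMeasure P]
    {d : ℕ} (hd : 1 ≤ d)
    (X : ℕ → Ω → (Fin d → ℝ)) (hmeas : ∀ i, Measurable (X i))
    (hstat : IsStrictStationary P X)
    (n : ℕ) (hn : 1 ≤ n) (u : Fin d → ℝ) :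
    ∫ ω, ‖empCFseq X n ω u - charFun (Measure.map (X 0) P) u‖ ^ 2 ∂P
      ≤ (2 * (1 + 4 * ∑ k ∈ Finset.Icc 1 (n - 1), mixCoef P X k) - 1) / n := by
  classical
  have hn0 : (0:ℝ) < n := by exact_mod_cast hn
  have hnc : (n:ℂ) ≠ 0 := Nat.cast_ne_zero.2 (by omega)
  -- basic functions
  have hdotm : Measurable (dot u) := by
    unfold dot
    exact Finset.measurable_sum _ fun i _ => by fun_prop
  set φf : (Fin d → ℝ) → ℝ := fun x => Real.cos (dot u x) with hφf
  set φg : (Fin d → ℝ) → ℝ := fun x => Real.sin (dot u x) with hφg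
  have hφfm : Measurable φf := Real.measurable_cos.comp hdotm
  have hφgm : Measurable φg := Real.measurable_sin.comp hdotm
  set f : ℕ → Ω → ℝ := fun j ω => φf (X j ω) with hf
  set g : ℕ → Ω → ℝ := fun j ω => φg (X j ω) with hg
  have hfm : ∀ j, Measurable (f j) := fun j => hφfm.comp (hmeas j)
  have hgm : ∀ j, Measurable (g j) := fun j => hφgm.comp (hmeas j)
  have hf1 : ∀ j ω, |f j ω| ≤ 1 := fun j ω => Real.abs_cos_le_one _
  have hg1 : ∀ j ω, |g j ω| ≤ 1 := fun j ω => Real.abs_sin_le_one _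
  have hfint : ∀ j, Integrable (f j) P := fun j =>
    integrable_bdd (hfm j).aestronglyMeasurable (hf1 j)
  have hgint : ∀ j, Integrable (g j) P := fun j =>
    integrable_bdd (hgm j).aestronglyMeasurable (hg1 j)
  -- stationarity of marginals
  have hmap : ∀ j, Measure.map (X j) P = Measure.map (X 0) P :=
    map_eq_of_stationary hstat hmeas
  set a : ℝ := ∫ x, φf x ∂(Measure.map (X 0) P) with ha
  set b : ℝ := ∫ x, φg x ∂(Measure.map (X 0) P) with hb
  have hfa : ∀ j, ∫ ω, f j ω ∂P = a := fun j => integral_comp_stat hmeas hmap hφfm j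
  have hgb : ∀ j, ∫ ω, g j ω ∂P = b := fun j => integral_comp_stat hmeas hmap hφgm j
  have ha1 : |a| ≤ 1 := by
    rw [← hfa 0]
    calc |∫ ω, f 0 ω ∂P| ≤ ∫ ω, |f 0 ω| ∂P := by
          simpa [Real.norm_eq_abs] using norm_integral_le_integral_norm (μ := P) (f 0)
      _ ≤ ∫ (_ : Ω), (1:ℝ) ∂P := integral_mono (hfint 0).abs (integrable_const 1) (hf1 0)
      _ = 1 := by simp
  have hb1 : |b| ≤ 1 := by
    rw [← hgb 0]
    calc |∫ ω, g 0 ω ∂P| ≤ ∫ ω, |g 0 ω| ∂P := by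
          simpa [Real.norm_eq_abs] using norm_integral_le_integral_norm (μ := P) (g 0)
      _ ≤ ∫ (_ : Ω), (1:ℝ) ∂P := integral_mono (hgint 0).abs (integrable_const 1) (hg1 0)
      _ = 1 := by simp
  -- the characteristic function
  haveI : IsProbabilityMeasure (Measure.map (X 0) P) :=
    Measure.isProbabilityMeasure_map (hmeas 0).aemeasurable
  have hZf : ∀ r : ℝ, Complex.exp (Complex.I * (r:ℂ))
      = (Real.cos r : ℂ) + (Real.sin r : ℂ) * Complex.I := by
    intro r
    rw [mul_comm, Complex.exp_mul_I, Complex.ofReal_cos, Complex.ofReal_sin]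
  have hμ : charFun (Measure.map (X 0) P) u = (a:ℂ) + (b:ℂ) * Complex.I := by
    unfold charFun
    have hint1 : Integrable (fun x => ((φf x : ℝ) : ℂ)) (Measure.map (X 0) P) :=
      (integrable_bdd hφfm.aestronglyMeasurable (fun x => Real.abs_cos_le_one _)).ofReal
    have hint2 : Integrable (fun x => ((φg x : ℝ) : ℂ) * Complex.I) (Measure.map (X 0) P) :=
      (integrable_bdd hφgm.aestronglyMeasurable (fun x => Real.abs_sin_le_one _)).ofReal.mul_const _
    calc ∫ x, Complex.exp (Complex.I * (dot u x : ℂ)) ∂(Measure.map (X 0) P)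
        = ∫ x, (((φf x : ℝ):ℂ) + ((φg x : ℝ):ℂ) * Complex.I) ∂(Measure.map (X 0) P) := by
          refine integral_congr_ae (Filter.Eventually.of_forall fun x => ?_)
          exact hZf (dot u x)
      _ = (∫ x, ((φf x : ℝ):ℂ) ∂(Measure.map (X 0) P))
            + (∫ x, ((φg x : ℝ):ℂ) ∂(Measure.map (X 0) P)) * Complex.I := by
          rw [integral_add hint1 hint2, integral_mul_const]
      _ = (a:ℂ) + (b:ℂ) * Complex.I := by
          have hta : ∫ x, ((φf x : ℝ):ℂ) ∂(Measure.map (X 0) P) = ((a:ℝ):ℂ) := by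
            rw [ha]; exact integral_ofReal
          have htb : ∫ x, ((φg x : ℝ):ℂ) ∂(Measure.map (X 0) P) = ((b:ℝ):ℂ) := by
            rw [hb]; exact integral_ofReal
          rw [hta, htb]
  -- centered sums (inline)
  -- pointwise identity
  have hpt : ∀ ω, ‖empCFseq X n ω u - charFun (Measure.map (X 0) P) u‖ ^ 2
      = ((n:ℝ)⁻¹)^2 * ((∑ j ∈ Finset.range n, (f j ω - a)) ^ 2
          + (∑ j ∈ Finset.range n, (g j ω - b)) ^ 2) := by
    intro ω
    have hsum : empCFseq X n ω u - charFun (Measure.map (X 0) P) u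
        = (n:ℂ)⁻¹ * (((∑ j ∈ Finset.range n, (f j ω - a) : ℝ) : ℂ)
            + ((∑ j ∈ Finset.range n, (g j ω - b) : ℝ) : ℂ) * Complex.I) := by
      unfold empCFseq
      rw [hμ]
      have h1 : ∑ j : Fin n, Complex.exp (Complex.I * (dot u (X (j:ℕ) ω) : ℂ))
          = ∑ j ∈ Finset.range n, Complex.exp (Complex.I * (dot u (X j ω) : ℂ)) :=
        Fin.sum_univ_eq_sum_range (fun j => Complex.exp (Complex.I * (dot u (X j ω) : ℂ))) n
      rw [h1]
      have h2 : ∑ j ∈ Finset.range n, Complex.exp (Complex.I * (dot u (X j ω) : ℂ))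
          = (((∑ j ∈ Finset.range n, (f j ω - a) : ℝ) : ℂ)
              + ((∑ j ∈ Finset.range n, (g j ω - b) : ℝ) : ℂ) * Complex.I)
            + (n:ℂ) * ((a:ℂ) + (b:ℂ) * Complex.I) := by
        have h3 : ∀ j, Complex.exp (Complex.I * (dot u (X j ω) : ℂ))
            = (((f j ω - a : ℝ)):ℂ) + (((g j ω - b : ℝ)):ℂ) * Complex.I
              + ((a:ℂ) + (b:ℂ) * Complex.I) := by
          intro j
          rw [hZf (dot u (X j ω))]
          simp only [hf, hg, hφf, hφg]
          push_cast
          ring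
        have e3 : ∑ j ∈ Finset.range n, (((f j ω - a : ℝ)):ℂ)
            = ((∑ j ∈ Finset.range n, (f j ω - a) : ℝ) : ℂ) := by push_cast; rfl
        have e4 : ∑ j ∈ Finset.range n, (((g j ω - b : ℝ)):ℂ)
            = ((∑ j ∈ Finset.range n, (g j ω - b) : ℝ) : ℂ) := by push_cast; rfl
        rw [Finset.sum_congr rfl fun j _ => h3 j]
        rw [Finset.sum_add_distrib, Finset.sum_add_distrib, Finset.sum_const,
          Finset.card_range, ← Finset.sum_mul, e3, e4, nsmul_eq_mul]
        try ring
      rw [h2]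
      have hcancel : (n:ℂ)⁻¹ * ((n:ℂ) * ((a:ℂ) + (b:ℂ) * Complex.I))
          = (a:ℂ) + (b:ℂ) * Complex.I := by
        field_simp
      rw [mul_add, hcancel]
      ring
    rw [hsum, norm_mul, mul_pow, norm_inv, Complex.norm_natCast]
    congr 1
    rw [Complex.sq_norm, Complex.normSq_apply]
    simp [pow_two]
  -- general helpers
  have hsumexp : ∀ q : ℕ → Ω → ℝ, (∀ j, Measurable (q j)) → (∀ j ω, |q j ω| ≤ 2) →
      ∫ ω, (∑ j ∈ Finset.range n, q j ω)^2 ∂P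
        = ∑ j ∈ Finset.range n, ∑ k ∈ Finset.range n, ∫ ω, q j ω * q k ω ∂P := by
    intro q hqm hq2
    have hqint : ∀ j k : ℕ, Integrable (fun ω => q j ω * q k ω) P := fun j k =>
      integrable_bdd ((hqm j).mul (hqm k)).aestronglyMeasurable (c := 4) (fun ω => by
        rw [abs_mul]
        nlinarith [abs_nonneg (q j ω), abs_nonneg (q k ω), hq2 j ω, hq2 k ω])
    have e : ∀ ω, (∑ j ∈ Finset.range n, q j ω)^2
        = ∑ j ∈ Finset.range n, ∑ k ∈ Finset.range n, q j ω * q k ω := fun ω => by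
      rw [pow_two]; exact Finset.sum_mul_sum _ _ _ _
    rw [integral_congr_ae (Filter.Eventually.of_forall e)]
    rw [integral_finset_sum _ fun j _ => integrable_finset_sum _ fun k _ => hqint j k]
    exact Finset.sum_congr rfl fun j _ => integral_finset_sum _ fun k _ => hqint j k
  have hcovgen : ∀ (p : ℕ → Ω → ℝ) (c0 : ℝ), (∀ j, Measurable (p j)) → (∀ j ω, |p j ω| ≤ 1) →
      (∀ j, ∫ ω, p j ω ∂P = c0) → ∀ j k : ℕ,
      ∫ ω, (p j ω - c0) * (p k ω - c0) ∂P = cov P (p j) (p k) := by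
    intro p c0 hpm hp1 hpc j k
    have hpint : ∀ j, Integrable (p j) P := fun j =>
      integrable_bdd (hpm j).aestronglyMeasurable (hp1 j)
    have i0 : Integrable (fun ω => p j ω * p k ω) P :=
      integrable_bdd ((hpm j).mul (hpm k)).aestronglyMeasurable (c := 1) (fun ω => by
        rw [abs_mul]
        nlinarith [abs_nonneg (p j ω), abs_nonneg (p k ω), hp1 j ω, hp1 k ω])
    have i1 : Integrable (fun ω => c0 * p j ω) P := (hpint j).const_mul c0
    have i2 : Integrable (fun ω => c0 * p k ω) P := (hpint k).const_mul c0
    have i3 : Integrable (fun ω => p j ω * p k ω - c0 * p j ω) P := by exact i0.sub i1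
    have i4 : Integrable (fun ω => p j ω * p k ω - c0 * p j ω - c0 * p k ω) P := by
      exact i3.sub i2
    have e : ∀ ω, (p j ω - c0) * (p k ω - c0)
        = p j ω * p k ω - c0 * p j ω - c0 * p k ω + c0 * c0 := fun ω => by ring
    rw [integral_congr_ae (Filter.Eventually.of_forall e)]
    rw [integral_add i4 (integrable_const (c0*c0)), integral_sub i3 i2, integral_sub i0 i1,
      integral_const_mul, integral_const_mul, hpc j, hpc k, integral_const]
    simp only [Measure.real, measure_univ, ENNReal.toReal_one, smul_eq_mul, one_mul, cov, hpc j, hpc k]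
    ring
  -- the double sum of covariances
  set T : ℝ := ∑ k ∈ Finset.Icc 1 (n-1), mixCoef P X k with hT
  set cc : ℕ → ℕ → ℝ := fun j k => cov P (f j) (f k) + cov P (g j) (g k) with hcc
  have hFm : ∀ j : ℕ, Measurable (fun ω => f j ω - a) := fun j => (hfm j).sub measurable_const
  have hGm : ∀ j : ℕ, Measurable (fun ω => g j ω - b) := fun j => (hgm j).sub measurable_const
  have hF2 : ∀ (j : ℕ) ω, |f j ω - a| ≤ 2 := fun j ω => by
    have h1 := abs_add_le (f j ω) (-a)
    have h2 := hf1 j ω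
    simp only [abs_neg] at h1
    calc |f j ω - a| = |f j ω + -a| := by ring_nf
      _ ≤ |f j ω| + |a| := h1
      _ ≤ 2 := by linarith
  have hG2 : ∀ (j : ℕ) ω, |g j ω - b| ≤ 2 := fun j ω => by
    have h1 := abs_add_le (g j ω) (-b)
    have h2 := hg1 j ω
    simp only [abs_neg] at h1
    calc |g j ω - b| = |g j ω + -b| := by ring_nf
      _ ≤ |g j ω| + |b| := h1
      _ ≤ 2 := by linarith
  have hLHS : ∫ ω, ‖empCFseq X n ω u - charFun (Measure.map (X 0) P) u‖ ^ 2 ∂P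
      = ((n:ℝ)⁻¹)^2 * ∑ j ∈ Finset.range n, ∑ k ∈ Finset.range n, cc j k := by
    rw [integral_congr_ae (Filter.Eventually.of_forall hpt)]
    have iF : Integrable (fun ω => (∑ j ∈ Finset.range n, (f j ω - a))^2) P := by
      refine integrable_bdd ?_ (c := (2*n)^2) ?_
      · exact ((Finset.measurable_sum _ fun j _ => hFm j).pow_const 2).aestronglyMeasurable
      · intro ω
        rw [abs_pow]
        have hb : |∑ j ∈ Finset.range n, (f j ω - a)| ≤ 2*n := by
          calc |∑ j ∈ Finset.range n, (f j ω - a)|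
              ≤ ∑ j ∈ Finset.range n, |f j ω - a| := Finset.abs_sum_le_sum_abs _ _
            _ ≤ ∑ j ∈ Finset.range n, (2:ℝ) := Finset.sum_le_sum fun j _ => hF2 j ω
            _ = 2*n := by simp [Finset.sum_const, Finset.card_range, mul_comm]
        exact pow_le_pow_left₀ (abs_nonneg _) hb 2
    have iG : Integrable (fun ω => (∑ j ∈ Finset.range n, (g j ω - b))^2) P := by
      refine integrable_bdd ?_ (c := (2*n)^2) ?_
      · exact ((Finset.measurable_sum _ fun j _ => hGm j).pow_const 2).aestronglyMeasurable
      · intro ω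
        rw [abs_pow]
        have hb : |∑ j ∈ Finset.range n, (g j ω - b)| ≤ 2*n := by
          calc |∑ j ∈ Finset.range n, (g j ω - b)|
              ≤ ∑ j ∈ Finset.range n, |g j ω - b| := Finset.abs_sum_le_sum_abs _ _
            _ ≤ ∑ j ∈ Finset.range n, (2:ℝ) := Finset.sum_le_sum fun j _ => hG2 j ω
            _ = 2*n := by simp [Finset.sum_const, Finset.card_range, mul_comm]
        exact pow_le_pow_left₀ (abs_nonneg _) hb 2
    rw [integral_const_mul, integral_add iF iG]
    rw [hsumexp (fun j ω => f j ω - a) hFm hF2, hsumexp (fun j ω => g j ω - b) hGm hG2]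
    congr 1
    rw [← Finset.sum_add_distrib]
    refine Finset.sum_congr rfl fun j _ => ?_
    rw [← Finset.sum_add_distrib]
    refine Finset.sum_congr rfl fun k _ => ?_
    rw [hcovgen f a hfm hf1 hfa j k, hcovgen g b hgm hg1 hgb j k]
  -- termwise bounds
  have hsym : ∀ j k, cc j k = cc k j := fun j k => by
    rw [hcc]
    simp only []
    rw [cov_comm P (f j) (f k), cov_comm P (g j) (g k)]
  have hdiag : ∀ j, cc j j ≤ 1 := by
    intro j
    have h1 : cov P (f j) (f j) = (∫ ω, f j ω * f j ω ∂P) - a*a := by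
      rw [cov, hfa j]
    have h2 : cov P (g j) (g j) = (∫ ω, g j ω * g j ω ∂P) - b*b := by
      rw [cov, hgb j]
    have i0 : Integrable (fun ω => f j ω * f j ω) P :=
      integrable_bdd ((hfm j).mul (hfm j)).aestronglyMeasurable (c := 1) (fun ω => by
        rw [abs_mul]; nlinarith [abs_nonneg (f j ω), hf1 j ω])
    have i1 : Integrable (fun ω => g j ω * g j ω) P :=
      integrable_bdd ((hgm j).mul (hgm j)).aestronglyMeasurable (c := 1) (fun ω => by
        rw [abs_mul]; nlinarith [abs_nonneg (g j ω), hg1 j ω])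
    have h3 : (∫ ω, f j ω * f j ω ∂P) + (∫ ω, g j ω * g j ω ∂P) = 1 := by
      rw [← integral_add i0 i1]
      have e : ∀ ω, f j ω * f j ω + g j ω * g j ω = 1 := fun ω => by
        have h := Real.cos_sq_add_sin_sq (dot u (X j ω))
        simp only [hf, hg, hφf, hφg]
        nlinarith [h]
      rw [integral_congr_ae (Filter.Eventually.of_forall e)]
      simp
    have h4 : cc j j = 1 - a*a - b*b := by rw [hcc]; simp only []; rw [h1, h2]; linarith
    nlinarith [mul_self_nonneg a, mul_self_nonneg b]
  have hoff : ∀ j k, j < k → cc j k ≤ 4 * mixCoef P X (k - j) := by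
    intro j k hjk
    have hle1 := sigmaLE_le hmeas j
    have hle2 := sigmaGE_le hmeas k
    have hfmF : Measurable[sigmaLE X j] (f j) := measurable_sigmaLE hφfm le_rfl
    have hfkG : Measurable[sigmaGE X k] (f k) := measurable_sigmaGE hφfm le_rfl
    have hgmF : Measurable[sigmaLE X j] (g j) := measurable_sigmaLE hφgm le_rfl
    have hgkG : Measurable[sigmaGE X k] (g k) := measurable_sigmaGE hφgm le_rfl
    have h1 : cov P (f j) (f k) ≤ 2 * alphaDep P (sigmaLE X j) (sigmaGE X k) :=
      cov_le_alphaDep P hle1 hle2 hfmF hfkG (hf1 j) (hf1 k)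
    have h2 : cov P (g j) (g k) ≤ 2 * alphaDep P (sigmaLE X j) (sigmaGE X k) :=
      cov_le_alphaDep P hle1 hle2 hgmF hgkG (hg1 j) (hg1 k)
    have h3 : alphaDep P (sigmaLE X j) (sigmaGE X k) ≤ mixCoef P X (k - j) := by
      have hkj : j + (k - j) = k := by omega
      have h := alphaDep_le_mixCoef P X (m := k - j) (by omega) j
      rwa [hkj] at h
    rw [hcc]
    simp only []
    linarith
  -- summation bounds
  have hTle : ∀ M : ℕ, M ≤ n - 1 → ∑ i ∈ Finset.range M, mixCoef P X (i+1) ≤ T := by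
    intro M hM
    have h1 : ∑ i ∈ Finset.range M, mixCoef P X (i+1)
        = ∑ m ∈ Finset.Ico 1 (M+1), mixCoef P X m := by
      rw [Finset.sum_Ico_eq_sum_range]
      simp only [Nat.add_sub_cancel]
      exact Finset.sum_congr rfl fun i _ => by rw [add_comm]
    rw [h1, hT]
    have h2 : Finset.Ico 1 (M+1) ⊆ Finset.Icc 1 (n-1) := by
      rw [Finset.Ico_add_one_right_eq_Icc]
      exact Finset.Icc_subset_Icc le_rfl hM
    exact Finset.sum_le_sum_of_subset_of_nonneg h2 fun m _ _ => mixCoef_nonneg P X m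
  have hinner : ∀ j ∈ Finset.range n, ∑ k ∈ Finset.range n, cc j k ≤ 1 + 8 * T := by
    intro j hj
    rw [Finset.mem_range] at hj
    have hsplit1 : ∑ k ∈ Finset.range n, cc j k
        = ∑ k ∈ Finset.range j, cc j k + ∑ k ∈ Finset.Ico j n, cc j k := by
      have h := Finset.sum_Ico_consecutive (fun k => cc j k) (Nat.zero_le j) hj.le
      rw [Finset.range_eq_Ico, ← h, ← Finset.range_eq_Ico]
    have hsplit2 : ∑ k ∈ Finset.Ico j n, cc j k
        = cc j j + ∑ k ∈ Finset.Ico (j+1) n, cc j k :=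
      Finset.sum_eq_sum_Ico_succ_bot hj _
    have hpart1 : ∑ k ∈ Finset.range j, cc j k ≤ 4 * T := by
      calc ∑ k ∈ Finset.range j, cc j k
          ≤ ∑ k ∈ Finset.range j, 4 * mixCoef P X (j - k) := by
            refine Finset.sum_le_sum fun k hk => ?_
            rw [Finset.mem_range] at hk
            rw [hsym j k]
            exact hoff k j hk
        _ = 4 * ∑ k ∈ Finset.range j, mixCoef P X (j - k) := by rw [Finset.mul_sum]
        _ = 4 * ∑ i ∈ Finset.range j, mixCoef P X (i+1) := by
            congr 1
            rw [← Finset.sum_range_reflect (fun k => mixCoef P X (j - k)) j]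
            refine Finset.sum_congr rfl fun i hi => ?_
            rw [Finset.mem_range] at hi
            congr 1
            omega
        _ ≤ 4 * T := by
            have h := hTle j (by omega)
            linarith
    have hpart2 : ∑ k ∈ Finset.Ico (j+1) n, cc j k ≤ 4 * T := by
      calc ∑ k ∈ Finset.Ico (j+1) n, cc j k
          ≤ ∑ k ∈ Finset.Ico (j+1) n, 4 * mixCoef P X (k - j) := by
            refine Finset.sum_le_sum fun k hk => ?_
            rw [Finset.mem_Ico] at hk
            exact hoff j k (by omega)
        _ = 4 * ∑ k ∈ Finset.Ico (j+1) n, mixCoef P X (k - j) := by rw [Finset.mul_sum]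
        _ = 4 * ∑ i ∈ Finset.range (n - (j+1)), mixCoef P X (i+1) := by
            congr 1
            rw [Finset.sum_Ico_eq_sum_range]
            refine Finset.sum_congr rfl fun i hi => ?_
            congr 1
            omega
        _ ≤ 4 * T := by
            have h := hTle (n - (j+1)) (by omega)
            linarith
    have hdj := hdiag j
    linarith
  have htotal : ∑ j ∈ Finset.range n, ∑ k ∈ Finset.range n, cc j k ≤ n * (1 + 8*T) := by
    calc ∑ j ∈ Finset.range n, ∑ k ∈ Finset.range n, cc j k
        ≤ ∑ _j ∈ Finset.range n, (1 + 8*T) := Finset.sum_le_sum hinner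
      _ = n * (1 + 8*T) := by
          rw [Finset.sum_const, Finset.card_range, nsmul_eq_mul]
  -- finish
  rw [hLHS]
  have hfin : ((n:ℝ)⁻¹)^2 * (n * (1 + 8*T)) = (2 * (1 + 4 * T) - 1) / n := by
    field_simp
    ring
  calc ((n:ℝ)⁻¹)^2 * ∑ j ∈ Finset.range n, ∑ k ∈ Finset.range n, cc j k
      ≤ ((n:ℝ)⁻¹)^2 * (n * (1 + 8*T)) := by
        refine mul_le_mul_of_nonneg_left htotal ?_
        positivity
    _ = (2 * (1 + 4 * T) - 1) / n := hfin


end ADE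
end
end

section
/- Let d ≥ 1, n ≥ 2 and let X_1,…,X_n be i.i.d. ℝ^d-valued random variables with common characteristic function φ_X. Then for every κ > 0 and every u ∈ ℝ^d, |φ_X(u)|² · P( |φ̂_{X,n}(u)| < κ_n/√n ) ≤ ( 4 + (1 + (κ+2)√(log n))² ) / n, where κ_n = 1 + κ√(log n). -/
open MeasureTheory Real Filter
open scoped BigOperators ENNReal

noncomputable section

namespace ADE

variable {Ω : Type*} [MeasurableSpace Ω] {E : Type*} [MeasurableSpace E]

section Aux

lemma measurable_dot' {d : ℕ} (u : Fin d → ℝ) : Measurable (dot u) :=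
  Finset.measurable_sum _ fun i _ => (measurable_pi_apply i).const_mul _

lemma integrable_of_bound' {γ : Type*} [MeasurableSpace γ] (ν : Measure γ)
    [IsFiniteMeasure ν] (f : γ → ℝ) (hf : Measurable f) (C : ℝ) (h : ∀ x, |f x| ≤ C) :
    Integrable f ν :=
  (integrable_const C).mono' hf.aestronglyMeasurable
    (ae_of_all _ (by simpa [Real.norm_eq_abs] using h))

lemma memL2_of_bound' {γ : Type*} [MeasurableSpace γ] (ν : Measure γ)
    [IsFiniteMeasure ν] (f : γ → ℝ) (hf : Measurable f) (C : ℝ) (h : ∀ x, |f x| ≤ C) :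
    MemLp f 2 ν :=
  (memLp_top_of_bound hf.aestronglyMeasurable C
    (ae_of_all _ (by simpa [Real.norm_eq_abs] using h))).mono_exponent le_top

lemma exp_I_eq (r : ℝ) :
    Complex.exp (Complex.I * r) = (Real.cos r : ℂ) + (Real.sin r : ℂ) * Complex.I := by
  rw [mul_comm, Complex.exp_mul_I, Complex.ofReal_cos, Complex.ofReal_sin]

variable {Ω' : Type*} [MeasurableSpace Ω']

lemma measurable_empCF {d n : ℕ} (X : Fin n → Ω' → (Fin d → ℝ)) (hX : ∀ j, Measurable (X j))
    (u : Fin d → ℝ) : Measurable (fun ω => empCF X ω u) := by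
  unfold empCF
  exact measurable_const.mul (Finset.measurable_sum _ fun j _ =>
    Complex.measurable_exp.comp
      ((Complex.measurable_ofReal.comp ((measurable_dot' u).comp (hX j))).const_mul _))

lemma abs_empCF_le_one {d n : ℕ} (hn : 1 ≤ n) (X : Fin n → Ω' → (Fin d → ℝ)) (ω : Ω')
    (u : Fin d → ℝ) : ‖empCF X ω u‖ ≤ 1 := by
  unfold empCF
  rw [norm_mul]
  have h1 : ‖((n : ℂ))⁻¹‖ = (n : ℝ)⁻¹ := by
    rw [norm_inv, Complex.norm_natCast]
  calc ‖((n:ℂ))⁻¹‖ * ‖∑ j, Complex.exp (Complex.I * (dot u (X j ω) : ℂ))‖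
      ≤ (n : ℝ)⁻¹ * ∑ j : Fin n, (1:ℝ) := by
        rw [h1]
        refine mul_le_mul_of_nonneg_left ?_ (by positivity)
        refine (norm_sum_le _ _).trans (Finset.sum_le_sum fun j _ => ?_)
        rw [Complex.norm_exp]
        simp
    _ = 1 := by
        simp only [Finset.sum_const, Finset.card_univ, Fintype.card_fin, nsmul_eq_mul, mul_one]
        rw [inv_mul_cancel₀ (show ((n:ℝ)) ≠ 0 from Nat.cast_ne_zero.2 (by omega))]

lemma abs_charFun_le_one {d : ℕ} (μ : Measure (Fin d → ℝ)) [IsProbabilityMeasure μ]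
    (u : Fin d → ℝ) : ‖charFun μ u‖ ≤ 1 := by
  unfold charFun
  refine (norm_integral_le_integral_norm _).trans ?_
  have : ∀ x : Fin d → ℝ, ‖Complex.exp (Complex.I * (dot u x : ℂ))‖ = 1 := by
    intro x
    rw [Complex.norm_exp]
    simp
  simp only [this]
  simp

end Aux


section Moment

variable {Ω' : Type*} [MeasurableSpace Ω']

lemma secondMoment_empCF
    (P : Measure Ω') [IsProbabilityMeasure P]
    {d n : ℕ} (hn : 2 ≤ n)
    (X : Fin n → Ω' → (Fin d → ℝ)) (hXmeas : ∀ j, Measurable (X j))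
    (hindep : ProbabilityTheory.iIndepFun X P)
    (μ : Measure (Fin d → ℝ)) (hident : ∀ j, Measure.map (X j) P = μ)
    (u : Fin d → ℝ) :
    ∫ ω, (‖empCF X ω u - charFun μ u‖) ^ 2 ∂P ≤ 1 / n := by
  have hn0 : (0:ℝ) < n := by positivity
  haveI : IsProbabilityMeasure μ := by
    rw [← hident ⟨0, by omega⟩]
    exact Measure.isProbabilityMeasure_map (hXmeas _).aemeasurable
  set g : (Fin d → ℝ) → ℝ := dot u with hgdef
  have hg : Measurable g := measurable_dot' u
  set co : (Fin d → ℝ) → ℝ := fun x => Real.cos (g x) with hcodef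
  set si : (Fin d → ℝ) → ℝ := fun x => Real.sin (g x) with hsidef
  have hco : Measurable co := Real.measurable_cos.comp hg
  have hsi : Measurable si := Real.measurable_sin.comp hg
  have hcob : ∀ x, |co x| ≤ 1 := fun x => Real.abs_cos_le_one _
  have hsib : ∀ x, |si x| ≤ 1 := fun x => Real.abs_sin_le_one _
  set α : ℝ := ∫ x, co x ∂μ with hαdef
  set β : ℝ := ∫ x, si x ∂μ with hβdef
  -- characteristic function decomposition
  have hchar : charFun μ u = (α : ℂ) + (β : ℂ) * Complex.I := by
    unfold charFun
    have h1 : ∀ x : Fin d → ℝ, Complex.exp (Complex.I * (dot u x : ℂ))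
        = ((co x : ℝ) : ℂ) + ((si x : ℝ) : ℂ) * Complex.I := fun x => exp_I_eq (g x)
    simp_rw [h1]
    have hic : Integrable (fun x : Fin d → ℝ => ((co x : ℝ) : ℂ)) μ :=
      (integrable_of_bound' μ co hco 1 hcob).ofReal
    have his2 : Integrable (fun x : Fin d → ℝ => ((si x : ℝ) : ℂ) * Complex.I) μ :=
      ((integrable_of_bound' μ si hsi 1 hsib).ofReal).mul_const Complex.I
    have e1 : ∫ x, ((co x : ℝ) : ℂ) ∂μ = ((∫ x, co x ∂μ : ℝ) : ℂ) := integral_ofReal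
    have e2 : ∫ x, ((si x : ℝ) : ℂ) ∂μ = ((∫ x, si x ∂μ : ℝ) : ℂ) := integral_ofReal
    rw [integral_add hic his2, integral_mul_const, e1, e2]
  -- empirical characteristic function decomposition
  set Yc : Ω' → ℝ := fun ω => (n:ℝ)⁻¹ * ∑ j, co (X j ω) with hYcdef
  set Ys : Ω' → ℝ := fun ω => (n:ℝ)⁻¹ * ∑ j, si (X j ω) with hYsdef
  have hemp : ∀ ω, empCF X ω u = ((Yc ω : ℝ) : ℂ) + ((Ys ω : ℝ) : ℂ) * Complex.I := by
    intro ω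
    unfold empCF
    have h1 : ∀ j : Fin n, Complex.exp (Complex.I * (dot u (X j ω) : ℂ))
        = ((co (X j ω) : ℝ) : ℂ) + ((si (X j ω) : ℝ) : ℂ) * Complex.I :=
      fun j => exp_I_eq (g (X j ω))
    simp_rw [h1, hYcdef, hYsdef]
    rw [Finset.sum_add_distrib, ← Finset.sum_mul]
    push_cast
    ring
  -- pointwise square identity
  have hD2 : ∀ ω, (‖empCF X ω u - charFun μ u‖) ^ 2
      = (Yc ω - α) ^ 2 + (Ys ω - β) ^ 2 := by
    intro ω
    rw [hemp ω, hchar]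
    have h2 : ((Yc ω : ℝ) : ℂ) + ((Ys ω : ℝ) : ℂ) * Complex.I - ((α : ℂ) + (β : ℂ) * Complex.I)
        = ((Yc ω - α : ℝ) : ℂ) + ((Ys ω - β : ℝ) : ℂ) * Complex.I := by
      push_cast; ring
    rw [h2, Complex.sq_norm, Complex.normSq_apply]
    simp
    ring
  -- expectations
  have hmap : ∀ (f : (Fin d → ℝ) → ℝ), Measurable f → ∀ j : Fin n,
      ∫ ω, f (X j ω) ∂P = ∫ x, f x ∂μ := by
    intro f hf j
    rw [← hident j, integral_map (hXmeas j).aemeasurable hf.aestronglyMeasurable]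
  have hEc : ∀ j : Fin n, ∫ ω, co (X j ω) ∂P = α := fun j => hmap co hco j
  have hEs : ∀ j : Fin n, ∫ ω, si (X j ω) ∂P = β := fun j => hmap si hsi j
  -- memℒp
  have hmemc : ∀ j : Fin n, MemLp (fun ω => co (X j ω)) 2 P :=
    fun j => memL2_of_bound' P _ (hco.comp (hXmeas j)) 1 (fun ω => hcob _)
  have hmems : ∀ j : Fin n, MemLp (fun ω => si (X j ω)) 2 P :=
    fun j => memL2_of_bound' P _ (hsi.comp (hXmeas j)) 1 (fun ω => hsib _)
  -- variance of single terms
  have hvarc : ∀ j : Fin n, ProbabilityTheory.variance (fun ω => co (X j ω)) P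
      = (∫ x, co x ^ 2 ∂μ) - α ^ 2 := by
    intro j
    rw [ProbabilityTheory.variance_eq_sub (hmemc j)]
    congr 1
    · have := hmap (fun x => co x ^ 2) (hco.pow_const 2) j
      simpa using this
    · rw [hEc j]
  have hvars : ∀ j : Fin n, ProbabilityTheory.variance (fun ω => si (X j ω)) P
      = (∫ x, si x ^ 2 ∂μ) - β ^ 2 := by
    intro j
    rw [ProbabilityTheory.variance_eq_sub (hmems j)]
    congr 1
    · have := hmap (fun x => si x ^ 2) (hsi.pow_const 2) j
      simpa using this
    · rw [hEs j]
  -- variance of sums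
  have hsumc : ProbabilityTheory.variance (fun ω => ∑ j, co (X j ω)) P
      = n * ((∫ x, co x ^ 2 ∂μ) - α ^ 2) := by
    have hpair : Set.Pairwise ↑(Finset.univ : Finset (Fin n))
        (fun i j => ProbabilityTheory.IndepFun (fun ω => co (X i ω)) (fun ω => co (X j ω)) P) :=
      fun i _ j _ hij => (hindep.indepFun hij).comp hco hco
    have := ProbabilityTheory.IndepFun.variance_sum (fun j _ => hmemc j) hpair
    rw [show (∑ j : Fin n, fun ω => co (X j ω)) = (fun ω => ∑ j, co (X j ω)) from
      (funext fun ω => Finset.sum_apply ω _ _)] at this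
    rw [this]
    simp [hvarc, mul_comm]
    ring
  have hsums : ProbabilityTheory.variance (fun ω => ∑ j, si (X j ω)) P
      = n * ((∫ x, si x ^ 2 ∂μ) - β ^ 2) := by
    have hpair : Set.Pairwise ↑(Finset.univ : Finset (Fin n))
        (fun i j => ProbabilityTheory.IndepFun (fun ω => si (X i ω)) (fun ω => si (X j ω)) P) :=
      fun i _ j _ hij => (hindep.indepFun hij).comp hsi hsi
    have := ProbabilityTheory.IndepFun.variance_sum (fun j _ => hmems j) hpair
    rw [show (∑ j : Fin n, fun ω => si (X j ω)) = (fun ω => ∑ j, si (X j ω)) from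
      (funext fun ω => Finset.sum_apply ω _ _)] at this
    rw [this]
    simp [hvars, mul_comm]
    ring
  -- mean and memℒp of Yc, Ys
  have hintc : ∀ j : Fin n, Integrable (fun ω => co (X j ω)) P :=
    fun j => (hmemc j).integrable one_le_two
  have hints : ∀ j : Fin n, Integrable (fun ω => si (X j ω)) P :=
    fun j => (hmems j).integrable one_le_two
  have hEYc : ∫ ω, Yc ω ∂P = α := by
    rw [hYcdef]
    rw [integral_const_mul, integral_finset_sum _ (fun j _ => hintc j)]
    simp only [hEc]
    simp only [Finset.sum_const, Finset.card_univ, Fintype.card_fin, nsmul_eq_mul]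
    field_simp
  have hEYs : ∫ ω, Ys ω ∂P = β := by
    rw [hYsdef]
    rw [integral_const_mul, integral_finset_sum _ (fun j _ => hints j)]
    simp only [hEs]
    simp only [Finset.sum_const, Finset.card_univ, Fintype.card_fin, nsmul_eq_mul]
    field_simp
  have hYcb : ∀ ω, |Yc ω| ≤ 1 := by
    intro ω
    rw [hYcdef, abs_mul, abs_inv, Nat.abs_cast]
    calc (n:ℝ)⁻¹ * |∑ j, co (X j ω)| ≤ (n:ℝ)⁻¹ * ∑ j : Fin n, (1:ℝ) := by
          refine mul_le_mul_of_nonneg_left ?_ (by positivity)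
          exact (Finset.abs_sum_le_sum_abs _ _).trans (Finset.sum_le_sum fun j _ => hcob _)
      _ = 1 := by
          simp only [Finset.sum_const, Finset.card_univ, Fintype.card_fin, nsmul_eq_mul, mul_one]
          rw [inv_mul_cancel₀ hn0.ne']
  have hYsb : ∀ ω, |Ys ω| ≤ 1 := by
    intro ω
    rw [hYsdef, abs_mul, abs_inv, Nat.abs_cast]
    calc (n:ℝ)⁻¹ * |∑ j, si (X j ω)| ≤ (n:ℝ)⁻¹ * ∑ j : Fin n, (1:ℝ) := by
          refine mul_le_mul_of_nonneg_left ?_ (by positivity)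
          exact (Finset.abs_sum_le_sum_abs _ _).trans (Finset.sum_le_sum fun j _ => hsib _)
      _ = 1 := by
          simp only [Finset.sum_const, Finset.card_univ, Fintype.card_fin, nsmul_eq_mul, mul_one]
          rw [inv_mul_cancel₀ hn0.ne']
  have hYcmeas : Measurable Yc :=
    (Finset.measurable_sum _ fun j _ => hco.comp (hXmeas j)).const_mul _
  have hYsmeas : Measurable Ys :=
    (Finset.measurable_sum _ fun j _ => hsi.comp (hXmeas j)).const_mul _
  have hYcmem : MemLp Yc 2 P := memL2_of_bound' P Yc hYcmeas 1 hYcb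
  have hYsmem : MemLp Ys 2 P := memL2_of_bound' P Ys hYsmeas 1 hYsb
  -- integral of centered squares = variance
  have hIc : ∫ ω, (Yc ω - α) ^ 2 ∂P = ProbabilityTheory.variance Yc P := by
    rw [ProbabilityTheory.variance_eq_integral hYcmem.aemeasurable, ← hEYc]
  have hIs : ∫ ω, (Ys ω - β) ^ 2 ∂P = ProbabilityTheory.variance Ys P := by
    rw [ProbabilityTheory.variance_eq_integral hYsmem.aemeasurable, ← hEYs]
  have hvYc : ProbabilityTheory.variance Yc P = (n:ℝ)⁻¹ * ((∫ x, co x ^ 2 ∂μ) - α ^ 2) := by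
    rw [hYcdef]
    rw [show (fun ω => (n:ℝ)⁻¹ * ∑ j, co (X j ω)) = (fun ω => (n:ℝ)⁻¹ * (fun ω => ∑ j, co (X j ω)) ω) from rfl,
      ProbabilityTheory.variance_const_mul, hsumc]
    field_simp
  have hvYs : ProbabilityTheory.variance Ys P = (n:ℝ)⁻¹ * ((∫ x, si x ^ 2 ∂μ) - β ^ 2) := by
    rw [hYsdef]
    rw [show (fun ω => (n:ℝ)⁻¹ * ∑ j, si (X j ω)) = (fun ω => (n:ℝ)⁻¹ * (fun ω => ∑ j, si (X j ω)) ω) from rfl,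
      ProbabilityTheory.variance_const_mul, hsums]
    field_simp
  -- sum of second moments equals one
  have hone : (∫ x, co x ^ 2 ∂μ) + (∫ x, si x ^ 2 ∂μ) = 1 := by
    rw [← integral_add (integrable_of_bound' μ _ (hco.pow_const 2) 1
        (fun x => by rw [abs_pow]; exact pow_le_one₀ (abs_nonneg _) (hcob x)))
      (integrable_of_bound' μ _ (hsi.pow_const 2) 1
        (fun x => by rw [abs_pow]; exact pow_le_one₀ (abs_nonneg _) (hsib x)))]
    have : ∀ x, co x ^ 2 + si x ^ 2 = 1 := fun x => Real.cos_sq_add_sin_sq (g x)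
    simp_rw [this]
    simp
  -- put everything together
  have hsplit : ∫ ω, (‖empCF X ω u - charFun μ u‖) ^ 2 ∂P
      = (∫ ω, (Yc ω - α) ^ 2 ∂P) + ∫ ω, (Ys ω - β) ^ 2 ∂P := by
    simp_rw [hD2]
    refine integral_add ?_ ?_
    · have := ((hYcmem.sub (memLp_const α)).integrable_sq)
      simpa [pow_two] using this
    · have := ((hYsmem.sub (memLp_const β)).integrable_sq)
      simpa [pow_two] using this
  rw [hsplit, hIc, hIs, hvYc, hvYs]
  have hαβ : 0 ≤ α ^ 2 + β ^ 2 := by positivity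
  have : (n:ℝ)⁻¹ * ((∫ x, co x ^ 2 ∂μ) - α ^ 2) + (n:ℝ)⁻¹ * ((∫ x, si x ^ 2 ∂μ) - β ^ 2)
      = (n:ℝ)⁻¹ * (1 - (α ^ 2 + β ^ 2)) := by
    rw [← mul_add]
    congr 1
    linarith [hone]
  rw [this, one_div]
  have h1 : 1 - (α ^ 2 + β ^ 2) ≤ 1 := by linarith
  calc (n:ℝ)⁻¹ * (1 - (α ^ 2 + β ^ 2)) ≤ (n:ℝ)⁻¹ * 1 :=
        mul_le_mul_of_nonneg_left h1 (by positivity)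
    _ = (n:ℝ)⁻¹ := mul_one _

end Moment


/-- bound on |φ_X(u)|² P(|φ̂_{X,n}(u)| < κ_n/√n). -/
theorem charFun_small_threshold_bound
    (P : Measure Ω) [IsProbabilityMeasure P]
    {d n : ℕ} (hd : 1 ≤ d) (hn : 2 ≤ n)
    (X : Fin n → Ω → (Fin d → ℝ)) (hXmeas : ∀ j, Measurable (X j))
    (hindep : ProbabilityTheory.iIndepFun X P)
    (μ : Measure (Fin d → ℝ)) (hident : ∀ j, Measure.map (X j) P = μ)
    (κ : ℝ) (hκ : 0 < κ) (u : Fin d → ℝ) :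
    ‖charFun μ u‖ ^ 2 *
      (P {ω | ‖empCF X ω u‖
          < (1 + κ * Real.sqrt (Real.log n)) / Real.sqrt n}).toReal
      ≤ (4 + (1 + (κ + 2) * Real.sqrt (Real.log n)) ^ 2) / n := by
  classical
  have hn0 : (0:ℝ) < n := by positivity
  have hrn : (0:ℝ) < Real.sqrt n := Real.sqrt_pos.2 hn0
  haveI : IsProbabilityMeasure μ := by
    rw [← hident ⟨0, by omega⟩]
    exact Measure.isProbabilityMeasure_map (hXmeas _).aemeasurable
  set t : ℝ := Real.sqrt (Real.log n) with htdef
  have ht0 : 0 ≤ t := Real.sqrt_nonneg _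
  have ht : (1:ℝ)/2 ≤ t := by
    have hlog2 : (1/4 : ℝ) ≤ Real.log 2 := by
      have := Real.log_two_gt_d9
      linarith
    have hmono : Real.log 2 ≤ Real.log n := by
      have : (2:ℝ) ≤ n := by exact_mod_cast hn
      exact Real.log_le_log (by norm_num) this
    have h14 : (1/4 : ℝ) ≤ Real.log n := le_trans hlog2 hmono
    calc (1:ℝ)/2 = Real.sqrt (1/4) := by
          rw [show (1/4:ℝ) = (1/2)^2 by norm_num, Real.sqrt_sq (by norm_num)]
      _ ≤ t := Real.sqrt_le_sqrt h14
  set c : ℝ := (1 + κ * t) / Real.sqrt n with hcdef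
  have hc0 : 0 ≤ c := by positivity
  set D : Ω → ℝ := fun ω => ‖empCF X ω u - charFun μ u‖ with hDdef
  have hDmeas : Measurable D := by
    exact continuous_norm.measurable.comp
      ((measurable_empCF X hXmeas u).sub measurable_const)
  have hDnn : ∀ ω, 0 ≤ D ω := fun ω => norm_nonneg _
  have hDbd : ∀ ω, |D ω| ≤ 2 := by
    intro ω
    rw [abs_of_nonneg (hDnn ω), hDdef]
    calc ‖empCF X ω u - charFun μ u‖
        ≤ ‖empCF X ω u‖ + ‖charFun μ u‖ :=
          norm_sub_le _ _
      _ ≤ 1 + 1 := add_le_add (abs_empCF_le_one (by omega) X ω u) (abs_charFun_le_one μ u)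
      _ = 2 := by norm_num
  have hDint : Integrable D P := integrable_of_bound' P D hDmeas 2 hDbd
  have hDmem : MemLp D 2 P := memL2_of_bound' P D hDmeas 2 hDbd
  have hD2int : Integrable (fun ω => D ω ^ 2) P :=
    integrable_of_bound' P _ (hDmeas.pow_const 2) 4
      (fun ω => by rw [abs_pow]; nlinarith [hDbd ω, abs_nonneg (D ω)])
  have hD2 : ∫ ω, D ω ^ 2 ∂P ≤ 1 / n :=
    secondMoment_empCF P hn X hXmeas hindep μ hident u
  have hDm0 : 0 ≤ ∫ ω, D ω ∂P := integral_nonneg hDnn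
  have hDmean : ∫ ω, D ω ∂P ≤ 1 / Real.sqrt n := by
    have hvar := ProbabilityTheory.variance_nonneg D P
    rw [ProbabilityTheory.variance_eq_sub hDmem] at hvar
    simp only [Pi.pow_apply] at hvar
    have hsq : (∫ ω, D ω ∂P) ^ 2 ≤ ∫ ω, D ω ^ 2 ∂P := by linarith
    have h1n : (∫ ω, D ω ∂P) ^ 2 ≤ 1 / n := le_trans hsq hD2
    calc ∫ ω, D ω ∂P = Real.sqrt ((∫ ω, D ω ∂P) ^ 2) := (Real.sqrt_sq hDm0).symm
      _ ≤ Real.sqrt (1 / n) := Real.sqrt_le_sqrt h1n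
      _ = 1 / Real.sqrt n := by rw [one_div, Real.sqrt_inv, one_div]
  -- the event
  set A : Set Ω := {ω | ‖empCF X ω u‖ < c} with hAdef
  have hA : MeasurableSet A := by
    exact measurableSet_lt
      (continuous_norm.measurable.comp (measurable_empCF X hXmeas u)) measurable_const
  have hφ : (0:ℝ) ≤ ‖charFun μ u‖ := norm_nonneg _
  -- pointwise bound on A
  have hpt : ∀ ω ∈ A, ‖charFun μ u‖ ^ 2 ≤ (D ω + c) ^ 2 := by
    intro ω hω
    have h1 : ‖charFun μ u‖ ≤ D ω + c := by
      have h2 : ‖charFun μ u‖ - ‖empCF X ω u‖ ≤ D ω := by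
        rw [hDdef]
        have := norm_sub_norm_le (charFun μ u) (empCF X ω u)
        rw [norm_sub_rev] at this
        simpa using this
      have h3 : ‖empCF X ω u‖ ≤ c := le_of_lt hω
      linarith
    exact pow_le_pow_left₀ hφ h1 2
  have hDcint : Integrable (fun ω => (D ω + c) ^ 2) P :=
    integrable_of_bound' P _ ((hDmeas.add_const c).pow_const 2) ((2 + c)^2)
      (fun ω => by
        rw [abs_pow]
        have h1 : |D ω + c| ≤ 2 + c := by
          rw [abs_of_nonneg (by linarith [hDnn ω])]
          linarith [hDbd ω, abs_of_nonneg (hDnn ω), (abs_le.1 (hDbd ω)).2]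
        calc |D ω + c| ^ 2 ≤ (2+c) ^ 2 := pow_le_pow_left₀ (abs_nonneg _) h1 2
          _ = (2+c)^2 := rfl)
  -- main chain
  have step0 : ‖charFun μ u‖ ^ 2 * (P A).toReal
      = ∫ ω in A, ‖charFun μ u‖ ^ 2 ∂P := by
    rw [setIntegral_const, smul_eq_mul, mul_comm]
    rfl
  have step1 : ∫ ω in A, ‖charFun μ u‖ ^ 2 ∂P ≤ ∫ ω in A, (D ω + c) ^ 2 ∂P := by
    refine setIntegral_mono_on (integrableOn_const (measure_ne_top _ _))
      hDcint.integrableOn hA hpt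
  have step2 : ∫ ω in A, (D ω + c) ^ 2 ∂P ≤ ∫ ω, (D ω + c) ^ 2 ∂P :=
    setIntegral_le_integral hDcint (ae_of_all _ fun ω => by positivity)
  have step3 : ∫ ω, (D ω + c) ^ 2 ∂P ≤ (1 / Real.sqrt n + c) ^ 2 := by
    have hexp : ∀ ω, (D ω + c) ^ 2 = D ω ^ 2 + (2 * c) * D ω + c ^ 2 := fun ω => by ring
    simp_rw [hexp]
    have i2 : Integrable (fun ω => (2*c) * D ω) P := hDint.const_mul (2*c)
    have i1 : Integrable (fun ω => D ω ^ 2 + (2*c) * D ω) P := hD2int.add i2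
    rw [integral_add i1 (integrable_const _), integral_add hD2int i2,
      integral_const_mul, integral_const]
    simp only [measure_univ, ENNReal.toReal_one, probReal_univ, smul_eq_mul, one_mul]
    have h2c : (2*c) * ∫ ω, D ω ∂P ≤ (2*c) * (1 / Real.sqrt n) :=
      mul_le_mul_of_nonneg_left hDmean (by positivity)
    have hexpand : (1 / Real.sqrt n + c) ^ 2
        = 1 / (n:ℝ) + (2*c) * (1 / Real.sqrt n) + c ^ 2 := by
      rw [add_sq, div_pow, one_pow, Real.sq_sqrt hn0.le]
      ring
    linarith [hD2, h2c, hexpand]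
  have step4 : (1 / Real.sqrt n + c) ^ 2 ≤ (4 + (1 + (κ + 2) * t) ^ 2) / n := by
    have hsum : 1 / Real.sqrt n + c = (2 + κ * t) / Real.sqrt n := by
      rw [hcdef]; field_simp; ring
    rw [hsum, div_pow, Real.sq_sqrt hn0.le]
    have h4 : (0:ℝ) ≤ 4 * t^2 - 2*t := by nlinarith [ht]
    have key : (2 + κ * t) ^ 2 ≤ 4 + (1 + (κ + 2) * t) ^ 2 := by
      nlinarith [mul_nonneg hκ.le h4, sq_nonneg (1 + 2*t), ht0]
    gcongr
  calc ‖charFun μ u‖ ^ 2 * (P A).toReal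
      = ∫ ω in A, ‖charFun μ u‖ ^ 2 ∂P := step0
    _ ≤ ∫ ω in A, (D ω + c) ^ 2 ∂P := step1
    _ ≤ ∫ ω, (D ω + c) ^ 2 ∂P := step2
    _ ≤ (1 / Real.sqrt n + c) ^ 2 := step3
    _ ≤ (4 + (1 + (κ + 2) * t) ^ 2) / n := step4


end ADE
end
end
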